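/- Let z₀ ∈ ℂ∖Λ be fixed. Then on U the matrix field Ω encoding the 2-form ω = −δln f₁ ∧ δx₁ − δln f₂ ∧ δx₂ + W(x₁−x₂) δx₁ ∧ δx₂ satisfies: (i) for all 1 ≤ i < j < k ≤ 4, ∂_i Ω_{jk} − ∂_j Ω_{ik} + ∂_k Ω_{ij} = 0 (ω is closed); (ii) det Ω(p) = 1/(f₁ f₂)² ≠ 0 at every p ∈ U (ω is nondegenerate); (iii) the vector field X(p) = (f₁, f₂, −f₁ f₂ W(x₁−x₂), f₁ f₂ W(x₁−x₂)) satisfies Σ_{k=1}^4 X_k Ω_{kj} = ∂_j H for all j = 1,…,4, where H = f₁ + f₂. In other words, the elliptic spin Ruijsenaars–Schneider system for N = 2 is Hamiltonian with symplectic form ω and Hamiltonian H = f₁ + f₂, whose flow is ẋ₁ = f₁, ẋ₂ = f₂, ḟ₁ = −f₁ f₂ (ζ(z₀+x₁−x₂) − ζ(z₀−x₁+x₂) − 2ζ(x₁−x₂)), ḟ₂ = f₁ f₂ (ζ(z₀+x₁−x₂) − ζ(z₀−x₁+x₂) − 2ζ(x₁−x₂)). -/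

import Mathlib

noncomputable section
open Complex

/-- The lattice Λ = ℤω₁ + ℤω₂. -/
def lattice (ω₁ ω₂ : ℂ) : Set ℂ := {z | ∃ m n : ℤ, z = m * ω₁ + n * ω₂}

/-- The Weierstrass zeta function ζ(z) = 1/z + Σ_{ω ∈ Λ∖{0}} (1/(z−ω) + 1/ω + z/ω²). -/
def wzeta (ω₁ ω₂ : ℂ) (z : ℂ) : ℂ :=
  1 / z + ∑' w : {w : ℂ // w ∈ lattice ω₁ ω₂ ∧ w ≠ 0},
    (1 / (z - (w : ℂ)) + 1 / (w : ℂ) + z / (w : ℂ) ^ 2)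

/-- W(u) = ζ(u+z₀) + ζ(u−z₀) − 2ζ(u). -/
def Wfun (ω₁ ω₂ z₀ u : ℂ) : ℂ :=
  wzeta ω₁ ω₂ (u + z₀) + wzeta ω₁ ω₂ (u - z₀) - 2 * wzeta ω₁ ω₂ u

/-- The antisymmetric matrix field Ω encoding the 2-form
ω = −δln f₁ ∧ δx₁ − δln f₂ ∧ δx₂ + W(x₁−x₂) δx₁ ∧ δx₂,
in the coordinate order (x₁,x₂,f₁,f₂) = (p 0, p 1, p 2, p 3):
Ω₁₂ = W(x₁−x₂), Ω₁₃ = 1/f₁, Ω₂₄ = 1/f₂, Ω₁₄ = Ω₂₃ = Ω₃₄ = 0, Ω_{ji} = −Ω_{ij}. -/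
def OmegaM (ω₁ ω₂ z₀ : ℂ) (p : Fin 4 → ℂ) : Matrix (Fin 4) (Fin 4) ℂ :=
  !![0, Wfun ω₁ ω₂ z₀ (p 0 - p 1), 1 / p 2, 0;
     -Wfun ω₁ ω₂ z₀ (p 0 - p 1), 0, 0, 1 / p 3;
     -(1 / p 2), 0, 0, 0;
     0, -(1 / p 3), 0, 0]

/-- The open set U = {(x₁,x₂,f₁,f₂) : f₁ ≠ 0, f₂ ≠ 0, x₁−x₂ ∉ Λ, x₁−x₂±z₀ ∉ Λ}. -/
def Uset (ω₁ ω₂ z₀ : ℂ) : Set (Fin 4 → ℂ) :=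
  {p | p 2 ≠ 0 ∧ p 3 ≠ 0 ∧ p 0 - p 1 ∉ lattice ω₁ ω₂ ∧
    p 0 - p 1 + z₀ ∉ lattice ω₁ ω₂ ∧ p 0 - p 1 - z₀ ∉ lattice ω₁ ω₂}

/-- Complex partial derivative ∂_i F(p) in the i-th coordinate. -/
def pderiv (i : Fin 4) (F : (Fin 4 → ℂ) → ℂ) (p : Fin 4 → ℂ) : ℂ :=
  deriv (fun t => F (Function.update p i t)) (p i)

/-- The vector field X(p) = (f₁, f₂, −f₁ f₂ W(x₁−x₂), f₁ f₂ W(x₁−x₂)). -/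
def Xvec (ω₁ ω₂ z₀ : ℂ) (p : Fin 4 → ℂ) : Fin 4 → ℂ :=
  ![p 2, p 3, -(p 2 * p 3 * Wfun ω₁ ω₂ z₀ (p 0 - p 1)),
    p 2 * p 3 * Wfun ω₁ ω₂ z₀ (p 0 - p 1)]

/-!
Every entry `Ω_jk` depends only on the coordinates `j` and `k`, so each term of the cyclic sum
in (i) differentiates a function that is constant in the variable of differentiation. The
determinant and `X Ω = dH` are direct 4×4 computations, and rewriting `W` in terms of
`ζ(z₀ ± x)` is the oddness of `ζ`, which follows by reindexing the lattice sum along `w ↦ -w`.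
-/

lemma neg_mem_lattice {ω₁ ω₂ z : ℂ} (h : z ∈ lattice ω₁ ω₂) : -z ∈ lattice ω₁ ω₂ := by
  obtain ⟨m, n, rfl⟩ := h
  exact ⟨-m, -n, by push_cast; ring⟩

def latticeNegEquiv (ω₁ ω₂ : ℂ) :
    {w : ℂ // w ∈ lattice ω₁ ω₂ ∧ w ≠ 0} ≃ {w : ℂ // w ∈ lattice ω₁ ω₂ ∧ w ≠ 0} :=
  (Equiv.neg ℂ).subtypeEquiv fun w =>
    ⟨fun h => ⟨neg_mem_lattice h.1, neg_ne_zero.mpr h.2⟩,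
     fun h => ⟨neg_neg w ▸ neg_mem_lattice h.1, neg_ne_zero.mp h.2⟩⟩

lemma wzeta_neg (ω₁ ω₂ z : ℂ) : wzeta ω₁ ω₂ (-z) = -wzeta ω₁ ω₂ z := by
  have hsum : ∑' w : {w : ℂ // w ∈ lattice ω₁ ω₂ ∧ w ≠ 0},
        (1 / (-z - (w : ℂ)) + 1 / (w : ℂ) + -z / (w : ℂ) ^ 2)
      = ∑' w : {w : ℂ // w ∈ lattice ω₁ ω₂ ∧ w ≠ 0},
        -(1 / (z - (w : ℂ)) + 1 / (w : ℂ) + z / (w : ℂ) ^ 2) := by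
    rw [← (latticeNegEquiv ω₁ ω₂).tsum_eq]
    refine tsum_congr fun w => ?_
    change 1 / (-z - -(w : ℂ)) + 1 / -(w : ℂ) + -z / (-(w : ℂ)) ^ 2 = _
    rw [neg_sq, show -z - -(w : ℂ) = -(z - w) by ring, div_neg, div_neg, neg_div]
    ring
  rw [wzeta, wzeta, hsum, tsum_neg]
  ring

lemma Wfun_eq_wzeta_sub (ω₁ ω₂ z₀ u : ℂ) :
    Wfun ω₁ ω₂ z₀ u
      = wzeta ω₁ ω₂ (z₀ + u) - wzeta ω₁ ω₂ (z₀ - u) - 2 * wzeta ω₁ ω₂ u := by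
  rw [Wfun, add_comm u, show u - z₀ = -(z₀ - u) by ring, wzeta_neg]
  ring

lemma pderiv_eq_zero_of_update_eq {i : Fin 4} {F : (Fin 4 → ℂ) → ℂ} {p : Fin 4 → ℂ}
    (h : ∀ t, F (Function.update p i t) = F p) : pderiv i F p = 0 := by
  simp only [pderiv, h, deriv_const]

lemma OmegaM_update_apply_of_ne (ω₁ ω₂ z₀ : ℂ) (p : Fin 4 → ℂ) {i j k : Fin 4}
    (hij : i ≠ j) (hik : i ≠ k) (t : ℂ) :
    OmegaM ω₁ ω₂ z₀ (Function.update p i t) j k = OmegaM ω₁ ω₂ z₀ p j k := by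
  fin_cases i <;> fin_cases j <;> fin_cases k <;> simp_all [OmegaM]

lemma det_omega_pattern {R : Type*} [CommRing R] (a b c : R) :
    !![0, a, b, 0; -a, 0, 0, c; -b, 0, 0, 0; 0, -c, 0, 0].det = b ^ 2 * c ^ 2 := by
  simp [Matrix.det_succ_row_zero, Fin.sum_univ_succ, Fin.succAbove, Matrix.submatrix]
  ring

lemma det_OmegaM (ω₁ ω₂ z₀ : ℂ) (p : Fin 4 → ℂ) :
    (OmegaM ω₁ ω₂ z₀ p).det = 1 / (p 2 * p 3) ^ 2 := by
  rw [OmegaM, det_omega_pattern]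
  ring

lemma Xvec_vecMul_OmegaM (ω₁ ω₂ z₀ : ℂ) {p : Fin 4 → ℂ} (hf₁ : p 2 ≠ 0) (hf₂ : p 3 ≠ 0) :
    Matrix.vecMul (Xvec ω₁ ω₂ z₀ p) (OmegaM ω₁ ω₂ z₀ p) = ![0, 0, 1, 1] := by
  ext j
  fin_cases j <;> simp [Matrix.vecMul, dotProduct, Fin.sum_univ_four, Xvec, OmegaM] <;>
    field_simp <;> ring

lemma pderiv_f₁_add_f₂ (p : Fin 4 → ℂ) (j : Fin 4) :
    pderiv j (fun q => q 2 + q 3) p = ![0, 0, 1, 1] j := by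
  fin_cases j <;> simp [pderiv]

theorem spin_RS_N2_hamiltonian_general (ω₁ ω₂ : ℂ)
    (z₀ : ℂ) :
    ∀ p ∈ Uset ω₁ ω₂ z₀,
      -- (i) ω is closed
      (∀ i j k : Fin 4, i < j → j < k →
        pderiv i (fun q => OmegaM ω₁ ω₂ z₀ q j k) p
          - pderiv j (fun q => OmegaM ω₁ ω₂ z₀ q i k) p
          + pderiv k (fun q => OmegaM ω₁ ω₂ z₀ q i j) p = 0) ∧
      -- (ii) ω is nondegenerate
      ((OmegaM ω₁ ω₂ z₀ p).det = 1 / (p 2 * p 3) ^ 2 ∧ (OmegaM ω₁ ω₂ z₀ p).det ≠ 0) ∧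
      -- (iii) X is the Hamiltonian vector field of H = f₁ + f₂
      (∀ j : Fin 4, ∑ k : Fin 4, Xvec ω₁ ω₂ z₀ p k * OmegaM ω₁ ω₂ z₀ p k j
          = pderiv j (fun q => q 2 + q 3) p) ∧
      -- the flow is ẋ₁ = f₁, ẋ₂ = f₂, ḟ₁ = −f₁f₂(ζ(z₀+x) − ζ(z₀−x) − 2ζ(x)), ḟ₂ = −ḟ₁
      Xvec ω₁ ω₂ z₀ p = ![p 2, p 3,
        -(p 2 * p 3 * (wzeta ω₁ ω₂ (z₀ + (p 0 - p 1)) - wzeta ω₁ ω₂ (z₀ - (p 0 - p 1))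
          - 2 * wzeta ω₁ ω₂ (p 0 - p 1))),
        p 2 * p 3 * (wzeta ω₁ ω₂ (z₀ + (p 0 - p 1)) - wzeta ω₁ ω₂ (z₀ - (p 0 - p 1))
          - 2 * wzeta ω₁ ω₂ (p 0 - p 1))] := by
  rintro p ⟨hf₁, hf₂, -⟩
  refine ⟨fun i j k hij hjk => ?_, ⟨det_OmegaM .., ?_⟩, fun j => ?_, ?_⟩
  · have hik := hij.trans hjk
    rw [pderiv_eq_zero_of_update_eq (OmegaM_update_apply_of_ne ω₁ ω₂ z₀ p hij.ne hik.ne),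
      pderiv_eq_zero_of_update_eq (OmegaM_update_apply_of_ne ω₁ ω₂ z₀ p hij.ne' hjk.ne),
      pderiv_eq_zero_of_update_eq (OmegaM_update_apply_of_ne ω₁ ω₂ z₀ p hik.ne' hjk.ne')]
    ring
  · rw [det_OmegaM]
    exact one_div_ne_zero (pow_ne_zero _ (mul_ne_zero hf₁ hf₂))
  · rw [pderiv_f₁_add_f₂, ← Xvec_vecMul_OmegaM ω₁ ω₂ z₀ hf₁ hf₂]
    rfl
  · simp only [Xvec, Wfun_eq_wzeta_sub]

/-- In the case N=2 the elliptic spin Ruijsenaars–Schneider system is Hamiltonian with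
symplectic form ω = −δln f₁ ∧ δx₁ − δln f₂ ∧ δx₂ + W(x₁−x₂) δx₁ ∧ δx₂ and Hamiltonian
H = f₁ + f₂: ω is closed, nondegenerate (det Ω = 1/(f₁f₂)² ≠ 0), and the Hamiltonian
vector field of H is X = (f₁, f₂, −f₁f₂W(x₁−x₂), f₁f₂W(x₁−x₂)), i.e. the flow
ẋ₁ = f₁, ẋ₂ = f₂, ḟ₁ = −f₁f₂(ζ(z₀+x₁−x₂) − ζ(z₀−x₁+x₂) − 2ζ(x₁−x₂)),
ḟ₂ = f₁f₂(ζ(z₀+x₁−x₂) − ζ(z₀−x₁+x₂) − 2ζ(x₁−x₂)). -/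
theorem spin_RS_N2_hamiltonian (ω₁ ω₂ : ℂ) (hω : (ω₂ / ω₁).im ≠ 0)
    (z₀ : ℂ) (hz₀ : z₀ ∉ lattice ω₁ ω₂) :
    ∀ p ∈ Uset ω₁ ω₂ z₀,
      -- (i) ω is closed
      (∀ i j k : Fin 4, i < j → j < k →
        pderiv i (fun q => OmegaM ω₁ ω₂ z₀ q j k) p
          - pderiv j (fun q => OmegaM ω₁ ω₂ z₀ q i k) p
          + pderiv k (fun q => OmegaM ω₁ ω₂ z₀ q i j) p = 0) ∧
      -- (ii) ω is nondegenerate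
      ((OmegaM ω₁ ω₂ z₀ p).det = 1 / (p 2 * p 3) ^ 2 ∧ (OmegaM ω₁ ω₂ z₀ p).det ≠ 0) ∧
      -- (iii) X is the Hamiltonian vector field of H = f₁ + f₂
      (∀ j : Fin 4, ∑ k : Fin 4, Xvec ω₁ ω₂ z₀ p k * OmegaM ω₁ ω₂ z₀ p k j
          = pderiv j (fun q => q 2 + q 3) p) ∧
      -- the flow is ẋ₁ = f₁, ẋ₂ = f₂, ḟ₁ = −f₁f₂(ζ(z₀+x) − ζ(z₀−x) − 2ζ(x)), ḟ₂ = −ḟ₁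
      Xvec ω₁ ω₂ z₀ p = ![p 2, p 3,
        -(p 2 * p 3 * (wzeta ω₁ ω₂ (z₀ + (p 0 - p 1)) - wzeta ω₁ ω₂ (z₀ - (p 0 - p 1))
          - 2 * wzeta ω₁ ω₂ (p 0 - p 1))),
        p 2 * p 3 * (wzeta ω₁ ω₂ (z₀ + (p 0 - p 1)) - wzeta ω₁ ω₂ (z₀ - (p 0 - p 1))
          - 2 * wzeta ω₁ ω₂ (p 0 - p 1))] :=
  spin_RS_N2_hamiltonian_general ω₁ ω₂ z₀
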